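/- Let f ∈ ℂ[[x,y]] be a nonzero formal power series, let A be a nonempty finite subset of ℝ≥0², set 𝒜 := A + ℝ≥0², and let ξ > 0 be a rational number. Then 𝒜 is contained in the interior of the dilated Newton polygon ξ·𝒩(f) if and only if for every nonzero vector v ∈ ℝ≥0² one has min_{a∈A} ⟨v,a⟩ > ξ·Φ_{𝒩(f)}(v). -/

import Mathlib

open scoped Pointwise

noncomputable section

/-- The standard inner (dot) product on ℝ². -/
def dot2 (v u : ℝ × ℝ) : ℝ := v.1 * u.1 + v.2 * u.2

/-- The nonnegative quadrant ℝ≥0² in ℝ². -/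
def quadrant2 : Set (ℝ × ℝ) := {u | 0 ≤ u.1 ∧ 0 ≤ u.2}

/-- The support of a power series f ∈ ℂ[[x,y]], viewed as a subset of ℝ². -/
def psupp (f : MvPowerSeries (Fin 2) ℂ) : Set (ℝ × ℝ) :=
  {p | ∃ d : Fin 2 →₀ ℕ, MvPowerSeries.coeff d f ≠ 0 ∧ p = ((d 0 : ℝ), (d 1 : ℝ))}

/-- The Newton polygon 𝒩(f) = conv(supp f) + ℝ≥0². -/
def newtonPoly (f : MvPowerSeries (Fin 2) ℂ) : Set (ℝ × ℝ) :=
  convexHull ℝ (psupp f) + quadrant2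

/-- The support function Φ_{𝒩(f)}(v) = inf{⟨v,u⟩ : u ∈ 𝒩(f)}. -/
def suppFn (f : MvPowerSeries (Fin 2) ℂ) (v : ℝ × ℝ) : ℝ :=
  sInf (dot2 v '' newtonPoly f)

/-- The monomial order ord_v(f) = min{⟨v,d⟩ : d ∈ supp f}. -/
def ordV (v : ℝ × ℝ) (f : MvPowerSeries (Fin 2) ℂ) : ℝ :=
  sInf (dot2 v '' psupp f)

/-!
If `C ⊆ ℝ²` is convex, nonempty and stable under `+ ℝ≥0²`, it has nonempty interior, so a point
`x ∉ interior C` is separated from it by Hahn–Banach: some `v ≠ 0` has `⟨v, x⟩ ≤ ⟨v, c⟩` on `C`,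
and stability under `+ ℝ≥0²` forces `v ∈ ℝ≥0²`. Conversely, from an interior point `x` one can
move a little in the direction `-v`, so `inf_C ⟨v, ·⟩ < ⟨v, x⟩`. For `C = ξ • 𝒩(f)` this infimum
is `ξ • Φ_{𝒩(f)}(v)`, and on `A + ℝ≥0²` the minimum of `⟨v, ·⟩` is attained on `A`.
-/

lemma quadrant2_eq_Ici : quadrant2 = Set.Ici 0 := rfl

lemma convex_quadrant2 : Convex ℝ quadrant2 := quadrant2_eq_Ici ▸ convex_Ici 0

lemma zero_mem_quadrant2 : (0 : ℝ × ℝ) ∈ quadrant2 := ⟨le_rfl, le_rfl⟩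

lemma add_mem_quadrant2 {p q : ℝ × ℝ} (hp : p ∈ quadrant2) (hq : q ∈ quadrant2) :
    p + q ∈ quadrant2 :=
  ⟨add_nonneg hp.1 hq.1, add_nonneg hp.2 hq.2⟩

lemma smul_mem_quadrant2 {c : ℝ} (hc : 0 ≤ c) {p : ℝ × ℝ} (hp : p ∈ quadrant2) :
    c • p ∈ quadrant2 :=
  ⟨mul_nonneg hc hp.1, mul_nonneg hc hp.2⟩

lemma dot2_add_right (v p q : ℝ × ℝ) : dot2 v (p + q) = dot2 v p + dot2 v q := by
  simp only [dot2, Prod.fst_add, Prod.snd_add]; ring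

lemma dot2_smul_right (v : ℝ × ℝ) (c : ℝ) (p : ℝ × ℝ) : dot2 v (c • p) = c * dot2 v p := by
  simp only [dot2, Prod.smul_fst, Prod.smul_snd, smul_eq_mul]; ring

lemma dot2_sub_right (v p q : ℝ × ℝ) : dot2 v (p - q) = dot2 v p - dot2 v q := by
  simp only [dot2, Prod.fst_sub, Prod.snd_sub]; ring

lemma dot2_neg_left (v u : ℝ × ℝ) : dot2 (-v) u = -dot2 v u := by
  simp only [dot2, Prod.fst_neg, Prod.snd_neg]; ring

lemma dot2_zero_left (u : ℝ × ℝ) : dot2 0 u = 0 := by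
  simp only [dot2, Prod.fst_zero, Prod.snd_zero]; ring

lemma dot2_nonneg {v u : ℝ × ℝ} (hv : v ∈ quadrant2) (hu : u ∈ quadrant2) : 0 ≤ dot2 v u :=
  add_nonneg (mul_nonneg hv.1 hu.1) (mul_nonneg hv.2 hu.2)

lemma dot2_self_pos {v : ℝ × ℝ} (hv : v ≠ 0) : 0 < dot2 v v := by
  have hv' : v.1 ≠ 0 ∨ v.2 ≠ 0 := by
    by_contra! h
    exact hv (Prod.ext h.1 h.2)
  unfold dot2
  rcases hv' with h | h
  · nlinarith [mul_self_pos.2 h, mul_self_nonneg v.2]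
  · nlinarith [mul_self_pos.2 h, mul_self_nonneg v.1]

lemma ContinuousLinearMap.apply_eq_dot2 (ℓ : ℝ × ℝ →L[ℝ] ℝ) (u : ℝ × ℝ) :
    ℓ u = dot2 (ℓ (1, 0), ℓ (0, 1)) u := by
  have hu : u = u.1 • ((1 : ℝ), (0 : ℝ)) + u.2 • ((0 : ℝ), (1 : ℝ)) := by ext <;> simp
  conv_lhs => rw [hu]
  rw [map_add, map_smul, map_smul, smul_eq_mul, smul_eq_mul, dot2]
  ring

lemma sInf_dot2_image_smul (v : ℝ × ℝ) (S : Set (ℝ × ℝ)) {ξ : ℝ} (hξ : 0 ≤ ξ) :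
    sInf (dot2 v '' (ξ • S)) = ξ * sInf (dot2 v '' S) := by
  rw [Set.image_smul_comm _ _ _ (dot2_smul_right v ξ), Real.sInf_smul_of_nonneg hξ, smul_eq_mul]

lemma bddBelow_dot2_image {S : Set (ℝ × ℝ)} (hS : S ⊆ quadrant2) {v : ℝ × ℝ}
    (hv : v ∈ quadrant2) : BddBelow (dot2 v '' S) :=
  ⟨0, Set.forall_mem_image.2 fun _ hu => dot2_nonneg hv (hS hu)⟩

lemma nonpos_of_forall_add_mul_le {a b M : ℝ} (h : ∀ t, 0 ≤ t → a + t * b ≤ M) : b ≤ 0 := by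
  by_contra! hb
  have haM : a ≤ M := by simpa using h 0 le_rfl
  have := h ((M - a) / b + 1) (add_nonneg (div_nonneg (sub_nonneg.2 haM) hb.le) zero_le_one)
  rw [add_mul, div_mul_cancel₀ _ hb.ne'] at this
  linarith

section QuadrantStable

variable {C : Set (ℝ × ℝ)}

lemma sInf_dot2_lt_of_mem_interior {v x : ℝ × ℝ} (hbdd : BddBelow (dot2 v '' C)) (hv : v ≠ 0)
    (hx : x ∈ interior C) : sInf (dot2 v '' C) < dot2 v x := by
  have hpath : Filter.Tendsto (fun t : ℝ => x - t • v) (nhds 0) (nhds x) :=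
    (by fun_prop : Continuous fun t : ℝ => x - t • v).tendsto' 0 x (by simp)
  have hev : ∀ᶠ t in nhdsWithin (0 : ℝ) (Set.Ioi 0), x - t • v ∈ C :=
    (hpath.eventually (mem_interior_iff_mem_nhds.mp hx)).filter_mono nhdsWithin_le_nhds
  obtain ⟨t, hxt, ht⟩ := (hev.and self_mem_nhdsWithin).exists
  calc sInf (dot2 v '' C) ≤ dot2 v (x - t • v) := csInf_le hbdd ⟨_, hxt, rfl⟩
    _ = dot2 v x - t * dot2 v v := by rw [dot2_sub_right, dot2_smul_right]
    _ < dot2 v x := by nlinarith [dot2_self_pos hv, ht]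

lemma interior_nonempty_of_add_quadrant2_subset (hrec : C + quadrant2 ⊆ C) (hne : C.Nonempty) :
    (interior C).Nonempty := by
  obtain ⟨c, hc⟩ := hne
  have hsub : Set.Ioi c.1 ×ˢ Set.Ioi c.2 ⊆ C := fun u hu =>
    add_sub_cancel c u ▸ hrec (Set.add_mem_add hc ⟨sub_nonneg.2 hu.1.le, sub_nonneg.2 hu.2.le⟩)
  exact ⟨(c.1 + 1, c.2 + 1), interior_maximal hsub (isOpen_Ioi.prod isOpen_Ioi)
    ⟨lt_add_one c.1, lt_add_one c.2⟩⟩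

lemma exists_dot2_le_of_notMem_interior (hC : Convex ℝ C) (hrec : C + quadrant2 ⊆ C)
    (hne : C.Nonempty) {x : ℝ × ℝ} (hx : x ∉ interior C) :
    ∃ v ∈ quadrant2, v ≠ 0 ∧ ∀ c ∈ C, dot2 v x ≤ dot2 v c := by
  obtain ⟨ℓ, hℓ⟩ := geometric_hahn_banach_open_point hC.interior isOpen_interior hx
  have hint := interior_nonempty_of_add_quadrant2_subset hrec hne
  have hℓC : ∀ c ∈ C, ℓ c ≤ ℓ x := by
    intro c hc
    have hc' : c ∈ closure (interior C) := by
      rw [hC.closure_interior_eq_closure_of_nonempty_interior hint]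
      exact subset_closure hc
    exact closure_minimal (fun u hu => (hℓ u hu).le) (isClosed_le ℓ.continuous continuous_const) hc'
  -- `C` contains every ray `c + ℝ≥0 • q`, on which `ℓ` stays bounded by `ℓ x`.
  have hℓQ : ∀ q ∈ quadrant2, ℓ q ≤ 0 := by
    intro q hq
    obtain ⟨c, hc⟩ := hne
    refine nonpos_of_forall_add_mul_le (a := ℓ c) (M := ℓ x) fun t ht => ?_
    simpa using hℓC _ (hrec (Set.add_mem_add hc (smul_mem_quadrant2 ht hq)))
  refine ⟨-(ℓ (1, 0), ℓ (0, 1)), ⟨?_, ?_⟩, ?_, fun c hc => ?_⟩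
  · exact neg_nonneg.2 (hℓQ _ ⟨zero_le_one, le_rfl⟩)
  · exact neg_nonneg.2 (hℓQ _ ⟨le_rfl, zero_le_one⟩)
  · intro h0
    obtain ⟨y, hy⟩ := hint
    have hlt := hℓ y hy
    rw [ℓ.apply_eq_dot2 y, ℓ.apply_eq_dot2 x, neg_eq_zero.1 h0, dot2_zero_left,
      dot2_zero_left] at hlt
    exact hlt.false
  · rw [dot2_neg_left, dot2_neg_left, ← ℓ.apply_eq_dot2, ← ℓ.apply_eq_dot2]
    linarith [hℓC c hc]

theorem mem_interior_iff_forall_sInf_dot2_lt (hC : Convex ℝ C) (hrec : C + quadrant2 ⊆ C)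
    (hne : C.Nonempty) (hbdd : ∀ v ∈ quadrant2, BddBelow (dot2 v '' C)) {x : ℝ × ℝ} :
    x ∈ interior C ↔ ∀ v ∈ quadrant2, v ≠ 0 → sInf (dot2 v '' C) < dot2 v x := by
  refine ⟨fun hx v hv hv0 => sInf_dot2_lt_of_mem_interior (hbdd v hv) hv0 hx, fun h => ?_⟩
  by_contra hx
  obtain ⟨v, hv, hv0, hle⟩ := exists_dot2_le_of_notMem_interior hC hrec hne hx
  exact (h v hv hv0).not_ge (le_csInf (hne.image _) (Set.forall_mem_image.2 hle))

theorem add_quadrant2_subset_interior_iff (hC : Convex ℝ C) (hrec : C + quadrant2 ⊆ C)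
    (hne : C.Nonempty) (hbdd : ∀ v ∈ quadrant2, BddBelow (dot2 v '' C)) (A : Set (ℝ × ℝ)) :
    A + quadrant2 ⊆ interior C ↔
      ∀ v ∈ quadrant2, v ≠ 0 → ∀ a ∈ A, sInf (dot2 v '' C) < dot2 v a := by
  simp_rw [Set.add_subset_iff, mem_interior_iff_forall_sInf_dot2_lt hC hrec hne hbdd]
  constructor
  · intro h v hv hv0 a ha
    simpa using h a ha 0 zero_mem_quadrant2 v hv hv0
  · intro h a ha q hq v hv hv0
    rw [dot2_add_right]
    linarith [h v hv hv0 a ha, dot2_nonneg hv hq]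

end QuadrantStable

lemma smul_add_quadrant2_subset {S : Set (ℝ × ℝ)} (hS : S + quadrant2 ⊆ S) {ξ : ℝ} (hξ : 0 < ξ) :
    ξ • S + quadrant2 ⊆ ξ • S := by
  rintro _ ⟨_, ⟨s, hs, rfl⟩, q, hq, rfl⟩
  refine ⟨s + ξ⁻¹ • q, hS (Set.add_mem_add hs (smul_mem_quadrant2 (by positivity) hq)), ?_⟩
  simp [smul_add, smul_inv_smul₀ hξ.ne']

lemma smul_subset_quadrant2 {S : Set (ℝ × ℝ)} (hS : S ⊆ quadrant2) {ξ : ℝ} (hξ : 0 ≤ ξ) :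
    ξ • S ⊆ quadrant2 := by
  rintro _ ⟨s, hs, rfl⟩
  exact smul_mem_quadrant2 hξ (hS hs)

lemma psupp_nonempty {f : MvPowerSeries (Fin 2) ℂ} (hf : f ≠ 0) : (psupp f).Nonempty := by
  obtain ⟨d, hd⟩ : ∃ d, MvPowerSeries.coeff d f ≠ 0 := by
    by_contra! h
    exact hf (MvPowerSeries.ext h)
  exact ⟨_, d, hd, rfl⟩

lemma psupp_subset_quadrant2 (f : MvPowerSeries (Fin 2) ℂ) : psupp f ⊆ quadrant2 := by
  rintro _ ⟨d, -, rfl⟩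
  exact ⟨Nat.cast_nonneg _, Nat.cast_nonneg _⟩

lemma newtonPoly_nonempty {f : MvPowerSeries (Fin 2) ℂ} (hf : f ≠ 0) :
    (newtonPoly f).Nonempty :=
  (convexHull_nonempty_iff.2 (psupp_nonempty hf)).add ⟨0, zero_mem_quadrant2⟩

lemma convex_newtonPoly (f : MvPowerSeries (Fin 2) ℂ) : Convex ℝ (newtonPoly f) :=
  (convex_convexHull ℝ _).add convex_quadrant2

lemma newtonPoly_subset_quadrant2 (f : MvPowerSeries (Fin 2) ℂ) : newtonPoly f ⊆ quadrant2 := by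
  rintro _ ⟨c, hc, q, hq, rfl⟩
  exact add_mem_quadrant2
    (convexHull_min (psupp_subset_quadrant2 f) convex_quadrant2 hc) hq

lemma newtonPoly_add_quadrant2_subset (f : MvPowerSeries (Fin 2) ℂ) :
    newtonPoly f + quadrant2 ⊆ newtonPoly f := by
  rintro _ ⟨_, ⟨c, hc, q, hq, rfl⟩, q', hq', rfl⟩
  exact ⟨c, hc, q + q', add_mem_quadrant2 hq hq', (add_assoc _ _ _).symm⟩

theorem inclusion_iff_all_normals_general (f : MvPowerSeries (Fin 2) ℂ) (hf : f ≠ 0)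
    (A : Finset (ℝ × ℝ)) (hA : A.Nonempty)
    (ξ : ℚ) (hξ : 0 < ξ) :
    ((↑A : Set (ℝ × ℝ)) + quadrant2 ⊆ interior ((ξ : ℝ) • newtonPoly f)) ↔
      ∀ v ∈ quadrant2, v ≠ 0 →
        (ξ : ℝ) * suppFn f v < (A.image (fun a => dot2 v a)).min' (hA.image _) := by
  have hξ' : (0 : ℝ) < ξ := by exact_mod_cast hξ
  rw [add_quadrant2_subset_interior_iff ((convex_newtonPoly f).smul _)
    (smul_add_quadrant2_subset (newtonPoly_add_quadrant2_subset f) hξ')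
    (newtonPoly_nonempty hf).smul_set
    fun _ => bddBelow_dot2_image (smul_subset_quadrant2 (newtonPoly_subset_quadrant2 f) hξ'.le)]
  refine forall₂_congr fun v _ => imp_congr_right fun _ => ?_
  rw [sInf_dot2_image_smul _ _ hξ'.le, Finset.lt_min'_iff, Finset.forall_mem_image]
  rfl

/-- For a nonempty finite A ⊆ ℝ≥0² and ξ > 0, the Minkowski sum A + ℝ≥0² is
contained in the interior of ξ·𝒩(f) iff min_{a∈A}⟨v,a⟩ > ξ·Φ_{𝒩(f)}(v) for all nonzero
v ∈ ℝ≥0². -/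
theorem inclusion_iff_all_normals (f : MvPowerSeries (Fin 2) ℂ) (hf : f ≠ 0)
    (A : Finset (ℝ × ℝ)) (hA : A.Nonempty) (hAq : (↑A : Set (ℝ × ℝ)) ⊆ quadrant2)
    (ξ : ℚ) (hξ : 0 < ξ) :
    ((↑A : Set (ℝ × ℝ)) + quadrant2 ⊆ interior ((ξ : ℝ) • newtonPoly f)) ↔
      ∀ v ∈ quadrant2, v ≠ 0 →
        (ξ : ℝ) * suppFn f v < (A.image (fun a => dot2 v a)).min' (hA.image _) :=
  inclusion_iff_all_normals_general f hf A hA ξ hξ
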